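/- arXiv:1903.01946 — 2 statements merged into one kernel-verified Lean document; each statement's English description precedes it below -/
import Mathlib

section
/- Let α > 0, μ > 0, Ω > 0, η₁ > 0 and K > 0, and define F(t) = γ(μ, μ t^{α/2}/Ω^α)/Γ(μ) and Φ₁(ρ) = η₁/(ρ K) for ρ > 0. Then lim_{ρ→∞} ρ^{αμ/2} · F(Φ₁(ρ)) = μ^μ η₁^{αμ/2} / (Ω^{αμ} K^{αμ/2} Γ(μ+1)). In particular, F(Φ₁(ρ)) decays as ρ^{−αμ/2} at high transmit SNR. -/
open Real Filter

/-- The lower incomplete Gamma function γ(s, x) = ∫₀ˣ t^{s−1} e^{−t} dt. -/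
noncomputable def lowerGamma (s x : ℝ) : ℝ :=
  ∫ t in (0 : ℝ)..x, t ^ (s - 1) * Real.exp (-t)

/-!
For small `x`, `e^{-x} ≤ e^{-t} ≤ 1` on `[0, x]` squeezes `γ(μ, x)` between `e^{-x} x^μ/μ` and
`x^μ/μ`, so `γ(μ, x) ~ x^μ/μ` as `x → 0⁺`. The argument of `γ` at the outage threshold is
`c ρ^{-α/2}`, whence `ρ^{αμ/2} γ(μ, c ρ^{-α/2}) → c^μ/μ`, and `μ Γ(μ) = Γ(μ + 1)`.
-/

open Topology

section
variable {μ : ℝ}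

theorem integral_rpow_sub_one (hμ : 0 < μ) (x : ℝ) :
    ∫ t in (0 : ℝ)..x, t ^ (μ - 1) = x ^ μ / μ := by
  rw [integral_rpow (Or.inl (by linarith)), sub_add_cancel, zero_rpow hμ.ne', sub_zero]

theorem intervalIntegrable_rpow_sub_one_mul_exp_neg (hμ : 0 < μ) (x : ℝ) :
    IntervalIntegrable (fun t : ℝ => t ^ (μ - 1) * exp (-t)) MeasureTheory.volume 0 x :=
  (intervalIntegral.intervalIntegrable_rpow' (by linarith)).mul_continuousOn (by fun_prop)

theorem lowerGamma_le_rpow_div {x : ℝ} (hμ : 0 < μ) (hx : 0 ≤ x) : lowerGamma μ x ≤ x ^ μ / μ := by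
  rw [← integral_rpow_sub_one hμ]
  refine intervalIntegral.integral_mono_on hx (intervalIntegrable_rpow_sub_one_mul_exp_neg hμ x)
    (intervalIntegral.intervalIntegrable_rpow' (by linarith)) fun t ht => ?_
  exact mul_le_of_le_one_right (rpow_nonneg ht.1 _) (exp_le_one_iff.2 (by linarith [ht.1]))

theorem exp_neg_mul_rpow_div_le_lowerGamma {x : ℝ} (hμ : 0 < μ) (hx : 0 ≤ x) :
    exp (-x) * (x ^ μ / μ) ≤ lowerGamma μ x := by
  rw [← integral_rpow_sub_one hμ, ← intervalIntegral.integral_const_mul]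
  refine intervalIntegral.integral_mono_on hx
    ((intervalIntegral.intervalIntegrable_rpow' (by linarith)).const_mul _)
    (intervalIntegrable_rpow_sub_one_mul_exp_neg hμ x) fun t ht => ?_
  rw [mul_comm]
  exact mul_le_mul_of_nonneg_left (exp_le_exp.2 (neg_le_neg ht.2)) (rpow_nonneg ht.1 _)

theorem tendsto_lowerGamma_div_rpow (hμ : 0 < μ) :
    Tendsto (fun x => lowerGamma μ x / x ^ μ) (𝓝[>] 0) (𝓝 μ⁻¹) := by
  have hlower : Tendsto (fun x : ℝ => exp (-x) / μ) (𝓝[>] 0) (𝓝 μ⁻¹) := by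
    have : Tendsto (fun x : ℝ => exp (-x) / μ) (𝓝 0) (𝓝 (exp (-0) / μ)) :=
      (Continuous.tendsto (by fun_prop) 0)
    simpa using this.mono_left nhdsWithin_le_nhds
  refine tendsto_of_tendsto_of_tendsto_of_le_of_le' hlower tendsto_const_nhds ?_ ?_ <;>
    filter_upwards [self_mem_nhdsWithin] with x (hx : 0 < x)
  · rw [le_div_iff₀ (rpow_pos_of_pos hx μ)]
    calc exp (-x) / μ * x ^ μ = exp (-x) * (x ^ μ / μ) := by ring
      _ ≤ lowerGamma μ x := exp_neg_mul_rpow_div_le_lowerGamma hμ hx.le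
  · rw [div_le_iff₀ (rpow_pos_of_pos hx μ)]
    calc lowerGamma μ x ≤ x ^ μ / μ := lowerGamma_le_rpow_div hμ hx.le
      _ = μ⁻¹ * x ^ μ := by ring

theorem Filter.Tendsto.mul_lowerGamma_of_eventually_mul_rpow_eq {ι : Type*} {l : Filter ι}
    {g y : ι → ℝ} {c : ℝ} (hμ : 0 < μ) (hy : Tendsto y l (𝓝[>] 0))
    (hgy : ∀ᶠ i in l, g i * y i ^ μ = c) :
    Tendsto (fun i => g i * lowerGamma μ (y i)) l (𝓝 (c * μ⁻¹)) := by
  refine (((tendsto_lowerGamma_div_rpow hμ).comp hy).const_mul c).congr' ?_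
  filter_upwards [hgy, hy self_mem_nhdsWithin] with i hi (hpos : 0 < y i)
  rw [← hi, Function.comp_apply]
  field_simp [(rpow_pos_of_pos hpos μ).ne']

end

theorem tendsto_const_mul_rpow_neg_atTop {c b : ℝ} (hc : 0 < c) (hb : 0 < b) :
    Tendsto (fun ρ : ℝ => c * ρ ^ (-b)) atTop (𝓝[>] 0) := by
  refine tendsto_nhdsWithin_of_tendsto_nhds_of_eventually_within _ ?_ ?_
  · simpa using (tendsto_rpow_neg_atTop hb).const_mul c
  · filter_upwards [eventually_gt_atTop 0] with ρ hρ
    exact mul_pos hc (rpow_pos_of_pos hρ _)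

theorem rpow_mul_mul_const_mul_rpow_neg_rpow {ρ c b μ : ℝ} (hρ : 0 < ρ) (hc : 0 ≤ c) :
    ρ ^ (b * μ) * (c * ρ ^ (-b)) ^ μ = c ^ μ := by
  rw [mul_rpow hc (rpow_nonneg hρ.le _), ← rpow_mul hρ.le, neg_mul, rpow_neg hρ.le]
  field_simp [(rpow_pos_of_pos hρ (b * μ)).ne']

/-- High-SNR decay of the channel-gain CDF at the outage threshold Φ₁(ρ) = η₁/(ρK):
ρ^{αμ/2}·F(Φ₁(ρ)) → μ^μ η₁^{αμ/2}/(Ω^{αμ} K^{αμ/2} Γ(μ+1)) as ρ → ∞. -/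
theorem cdf_outage_threshold_decay (α μ Ω η₁ K : ℝ)
    (hα : 0 < α) (hμ : 0 < μ) (hΩ : 0 < Ω) (hη₁ : 0 < η₁) (hK : 0 < K) :
    Tendsto
      (fun ρ : ℝ =>
        ρ ^ (α * μ / 2) *
          (lowerGamma μ (μ * (η₁ / (ρ * K)) ^ (α / 2) / Ω ^ α) / Real.Gamma μ))
      atTop
      (nhds (μ ^ μ * η₁ ^ (α * μ / 2) /
        (Ω ^ (α * μ) * K ^ (α * μ / 2) * Real.Gamma (μ + 1)))) := by
  set c := μ * (η₁ / K) ^ (α / 2) / Ω ^ α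
  have hc : 0 < c := by positivity
  have harg :
      ∀ᶠ ρ : ℝ in atTop, μ * (η₁ / (ρ * K)) ^ (α / 2) / Ω ^ α = c * ρ ^ (-(α / 2)) := by
    filter_upwards [eventually_gt_atTop 0] with ρ hρ
    rw [rpow_neg hρ.le, mul_comm ρ, ← div_div, div_rpow (by positivity) hρ.le]
    ring
  have hlim :=
    (tendsto_const_mul_rpow_neg_atTop hc (half_pos hα)).mul_lowerGamma_of_eventually_mul_rpow_eq
      (g := fun ρ => ρ ^ (α / 2 * μ)) hμ <| by
    filter_upwards [eventually_gt_atTop 0] with ρ hρ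
    exact rpow_mul_mul_const_mul_rpow_neg_rpow hρ hc.le
  have hc_rpow : c ^ μ = μ ^ μ * η₁ ^ (α * μ / 2) / (Ω ^ (α * μ) * K ^ (α * μ / 2)) := by
    rw [div_rpow (by positivity) (by positivity), mul_rpow hμ.le (by positivity),
      ← rpow_mul (by positivity), ← rpow_mul hΩ.le, div_rpow hη₁.le hK.le,
      div_mul_eq_mul_div α 2 μ]
    ring
  convert (hlim.div_const (Gamma μ)).congr' ?_ using 2
  · rw [hc_rpow, Gamma_add_one hμ.ne']
    field_simp
  · filter_upwards [harg] with ρ hρ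
    rw [← hρ, mul_div_assoc, div_mul_eq_mul_div α 2 μ]
end

section
/- Let X and Y be independent real-valued random variables on a probability space with probability measure ℙ such that for all t ≥ 0, ℙ(X ≤ t) = γ(μ_sr, (μ_sr/Ω_sr^{α_sr})·t^{α_sr/2})/Γ(μ_sr) and ℙ(Y ≤ t) = γ(μ_rd, (μ_rd/Ω_rd^{α_rd})·t^{α_rd/2})/Γ(μ_rd), where α_sr, μ_sr, Ω_sr, α_rd, μ_rd, Ω_rd > 0. Let Φ₁ ≥ 0, Φ₂ ≥ 0, c ≥ 0, set Φ_max = max(Φ₁, Φ₂), and define the disjoint events E₁ = {X < Φ₁}, E₂ = {Φ₁ ≤ X < Φ₂}, E₃ = {X ≥ Φ_max and Y < c}. Then ℙ(E₁ ∪ E₂ ∪ E₃) = γ(μ_sr, (μ_sr/Ω_sr^{α_sr})Φ_max^{α_sr/2})/Γ(μ_sr) + γ(μ_rd, (μ_rd/Ω_rd^{α_rd})c^{α_rd/2})/Γ(μ_rd) − [γ(μ_sr, (μ_sr/Ω_sr^{α_sr})Φ_max^{α_sr/2})/Γ(μ_sr)]·[γ(μ_rd, (μ_rd/Ω_rd^{α_rd})c^{α_rd/2})/Γ(μ_rd)].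 -/
/-!
The three events cover exactly `{X < Φ_max} ∪ {Y < c}`, a union of two independent events,
so the outage probability is `a + b - a b` with `a = ℙ(X < Φ_max)` and `b = ℙ(Y < c)`.
The hypotheses give the distribution functions `ℙ(X ≤ t)`; since the α-μ distribution function
vanishes at `0` and is continuous on `(0, ∞)`, the strict and non-strict events have the same
probability.
-/

open MeasureTheory ProbabilityTheory Real

open Set Filter Topology

lemma integrableOn_lowerGamma_integrand {s : ℝ} (hs : 0 < s) (b : ℝ) :
    IntegrableOn (fun t : ℝ => t ^ (s - 1) * exp (-t)) (Ioc 0 b) :=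
  ((GammaIntegral_convergent hs).mono_set Ioc_subset_Ioi_self).congr_fun
    (fun _ _ => mul_comm _ _) measurableSet_Ioc

lemma lowerGamma_zero (s : ℝ) : lowerGamma s 0 = 0 := intervalIntegral.integral_same

lemma continuousAt_lowerGamma {s x : ℝ} (hs : 0 < s) (hx : 0 < x) :
    ContinuousAt (lowerGamma s) x := by
  have hint : IntegrableOn (fun t : ℝ => t ^ (s - 1) * exp (-t)) (uIcc 0 (x + 1)) := by
    rw [uIcc_of_le (by linarith), integrableOn_Icc_iff_integrableOn_Ioc]
    exact integrableOn_lowerGamma_integrand hs _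
  refine (intervalIntegral.continuousOn_primitive_interval hint).continuousAt ?_
  rw [uIcc_of_le (by linarith)]
  exact Icc_mem_nhds hx (lt_add_one x)

/-- The distribution function of the squared α-μ distribution with parameters `α`, `μ`, `Ω`. -/
noncomputable def alphaMuCDF (α μ Ω t : ℝ) : ℝ :=
  lowerGamma μ (μ / Ω ^ α * t ^ (α / 2)) / Gamma μ

lemma alphaMuCDF_zero {α : ℝ} (hα : 0 < α) (μ Ω : ℝ) : alphaMuCDF α μ Ω 0 = 0 := by
  rw [alphaMuCDF, zero_rpow (half_pos hα).ne', mul_zero, lowerGamma_zero, zero_div]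

lemma continuousAt_alphaMuCDF {α μ Ω t : ℝ} (hμ : 0 < μ) (hΩ : 0 < Ω) (ht : 0 < t) :
    ContinuousAt (alphaMuCDF α μ Ω) t := by
  have hpos : 0 < μ / Ω ^ α * t ^ (α / 2) := by positivity
  exact ((continuousAt_lowerGamma hμ hpos).comp (f := fun s => μ / Ω ^ α * s ^ (α / 2))
    (continuousAt_const.mul (continuousAt_rpow_const t _ (Or.inl ht.ne')))).div_const _

lemma measureReal_lt_eq_of_cdf {S : Type*} [MeasurableSpace S] {P : Measure S}
    [IsFiniteMeasure P] {X : S → ℝ} {F : ℝ → ℝ}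
    (hcdf : ∀ t, 0 ≤ t → P.real {ω | X ω ≤ t} = F t) (hF₀ : F 0 = 0)
    (hF : ∀ t, 0 < t → ContinuousAt F t) {t : ℝ} (ht : 0 ≤ t) :
    P.real {ω | X ω < t} = F t := by
  have hle : P.real {ω | X ω < t} ≤ F t :=
    calc P.real {ω | X ω < t} ≤ P.real {ω | X ω ≤ t} :=
          measureReal_mono fun ω (h : X ω < t) => h.le
      _ = F t := hcdf t ht
  rcases ht.eq_or_lt with rfl | ht
  · exact le_antisymm hle (by rw [hF₀]; exact measureReal_nonneg)
  refine le_antisymm hle (le_of_tendsto ((hF t ht).tendsto.mono_left (nhdsWithin_le_nhds (s := Iio t))) ?_)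
  filter_upwards [Ioo_mem_nhdsLT ht] with s hs
  rw [← hcdf s hs.1.le]
  exact measureReal_mono fun ω (h : X ω ≤ s) => h.trans_lt hs.2

lemma ProbabilityTheory.IndepFun.measureReal_preimage_union {Ω β γ : Type*} [MeasurableSpace Ω]
    [MeasurableSpace β] [MeasurableSpace γ] {P : Measure Ω} [IsFiniteMeasure P]
    {X : Ω → β} {Y : Ω → γ} (hXY : IndepFun X Y P) (hY : Measurable Y)
    {A : Set β} {B : Set γ} (hA : MeasurableSet A) (hB : MeasurableSet B) :
    P.real (X ⁻¹' A ∪ Y ⁻¹' B) =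
      P.real (X ⁻¹' A) + P.real (Y ⁻¹' B) - P.real (X ⁻¹' A) * P.real (Y ⁻¹' B) := by
  have hinter : P.real (X ⁻¹' A ∩ Y ⁻¹' B) = P.real (X ⁻¹' A) * P.real (Y ⁻¹' B) := by
    simp only [measureReal_def, hXY.measure_inter_preimage_eq_mul A B hA hB,
      ENNReal.toReal_mul]
  linarith [measureReal_union_add_inter (μ := P) (s := X ⁻¹' A) (hY hB)]

theorem noma_s2_outage_probability_closed_form_general
    (αsr μsr Ωsr αrd μrd Ωrd : ℝ)
    (hαsr : 0 < αsr) (hμsr : 0 < μsr) (hΩsr : 0 < Ωsr)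
    (hαrd : 0 < αrd) (hμrd : 0 < μrd) (hΩrd : 0 < Ωrd)
    {S : Type*} [MeasurableSpace S] (P : Measure S) [IsProbabilityMeasure P]
    (X Y : S → ℝ) (hY : Measurable Y)
    (hindep : IndepFun X Y P)
    (hXcdf : ∀ t : ℝ, 0 ≤ t →
      (P {ω | X ω ≤ t}).toReal =
        lowerGamma μsr ((μsr / Ωsr ^ αsr) * t ^ (αsr / 2)) / Real.Gamma μsr)
    (hYcdf : ∀ t : ℝ, 0 ≤ t →
      (P {ω | Y ω ≤ t}).toReal =
        lowerGamma μrd ((μrd / Ωrd ^ αrd) * t ^ (αrd / 2)) / Real.Gamma μrd)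
    (Φ₁ Φ₂ c : ℝ) (hΦ₁ : 0 ≤ Φ₁) (hc : 0 ≤ c) :
    (P ({ω | X ω < Φ₁} ∪ {ω | Φ₁ ≤ X ω ∧ X ω < Φ₂} ∪
        {ω | max Φ₁ Φ₂ ≤ X ω ∧ Y ω < c})).toReal =
      lowerGamma μsr ((μsr / Ωsr ^ αsr) * (max Φ₁ Φ₂) ^ (αsr / 2)) /
          Real.Gamma μsr +
        lowerGamma μrd ((μrd / Ωrd ^ αrd) * c ^ (αrd / 2)) / Real.Gamma μrd -
        (lowerGamma μsr ((μsr / Ωsr ^ αsr) * (max Φ₁ Φ₂) ^ (αsr / 2)) /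
            Real.Gamma μsr) *
          (lowerGamma μrd ((μrd / Ωrd ^ αrd) * c ^ (αrd / 2)) / Real.Gamma μrd) := by
  have hevents : {ω | X ω < Φ₁} ∪ {ω | Φ₁ ≤ X ω ∧ X ω < Φ₂} ∪
      {ω | max Φ₁ Φ₂ ≤ X ω ∧ Y ω < c} = X ⁻¹' Iio (max Φ₁ Φ₂) ∪ Y ⁻¹' Iio c := by
    ext ω
    simp only [mem_union, mem_ofPred_eq, mem_preimage, mem_Iio, lt_max_iff, max_le_iff]
    by_cases h : X ω < Φ₁ <;> by_cases h' : X ω < Φ₂ <;> simp_all [not_lt]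
  have hXlt : P.real (X ⁻¹' Iio (max Φ₁ Φ₂)) = alphaMuCDF αsr μsr Ωsr (max Φ₁ Φ₂) :=
    measureReal_lt_eq_of_cdf hXcdf (alphaMuCDF_zero hαsr _ _)
      (fun _ => continuousAt_alphaMuCDF hμsr hΩsr) (le_max_of_le_left hΦ₁)
  have hYlt : P.real (Y ⁻¹' Iio c) = alphaMuCDF αrd μrd Ωrd c :=
    measureReal_lt_eq_of_cdf hYcdf (alphaMuCDF_zero hαrd _ _)
      (fun _ => continuousAt_alphaMuCDF hμrd hΩrd) hc
  rw [hevents, ← measureReal_def,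
    hindep.measureReal_preimage_union hY measurableSet_Iio measurableSet_Iio, hXlt, hYlt]
  rfl

/-- Closed-form outage probability of symbol s₂ in CRS-NOMA over α-μ fading:
with disjoint events E₁ = {X < Φ₁}, E₂ = {Φ₁ ≤ X < Φ₂}, E₃ = {X ≥ Φ_max, Y < c},
ℙ(E₁ ∪ E₂ ∪ E₃) = F_sr(Φ_max) + F_rd(c) − F_sr(Φ_max)F_rd(c). -/
theorem noma_s2_outage_probability_closed_form
    (αsr μsr Ωsr αrd μrd Ωrd : ℝ)
    (hαsr : 0 < αsr) (hμsr : 0 < μsr) (hΩsr : 0 < Ωsr)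
    (hαrd : 0 < αrd) (hμrd : 0 < μrd) (hΩrd : 0 < Ωrd)
    {S : Type*} [MeasurableSpace S] (P : Measure S) [IsProbabilityMeasure P]
    (X Y : S → ℝ) (hX : Measurable X) (hY : Measurable Y)
    (hindep : IndepFun X Y P)
    (hXcdf : ∀ t : ℝ, 0 ≤ t →
      (P {ω | X ω ≤ t}).toReal =
        lowerGamma μsr ((μsr / Ωsr ^ αsr) * t ^ (αsr / 2)) / Real.Gamma μsr)
    (hYcdf : ∀ t : ℝ, 0 ≤ t →
      (P {ω | Y ω ≤ t}).toReal =
        lowerGamma μrd ((μrd / Ωrd ^ αrd) * t ^ (αrd / 2)) / Real.Gamma μrd)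
    (Φ₁ Φ₂ c : ℝ) (hΦ₁ : 0 ≤ Φ₁) (hΦ₂ : 0 ≤ Φ₂) (hc : 0 ≤ c) :
    (P ({ω | X ω < Φ₁} ∪ {ω | Φ₁ ≤ X ω ∧ X ω < Φ₂} ∪
        {ω | max Φ₁ Φ₂ ≤ X ω ∧ Y ω < c})).toReal =
      lowerGamma μsr ((μsr / Ωsr ^ αsr) * (max Φ₁ Φ₂) ^ (αsr / 2)) /
          Real.Gamma μsr +
        lowerGamma μrd ((μrd / Ωrd ^ αrd) * c ^ (αrd / 2)) / Real.Gamma μrd -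
        (lowerGamma μsr ((μsr / Ωsr ^ αsr) * (max Φ₁ Φ₂) ^ (αsr / 2)) /
            Real.Gamma μsr) *
          (lowerGamma μrd ((μrd / Ωrd ^ αrd) * c ^ (αrd / 2)) / Real.Gamma μrd) :=
  noma_s2_outage_probability_closed_form_general αsr μsr Ωsr αrd μrd Ωrd hαsr hμsr hΩsr hαrd hμrd
    hΩrd P X Y hY hindep hXcdf hYcdf Φ₁ Φ₂ c hΦ₁ hc
end
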